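/- arXiv:2006.02769 — 3 statements merged into one kernel-verified Lean document; each statement's English description precedes it below -/
import Mathlib

section
/- Let λ > 0 and (g₁,g₂) ∈ ℝ², and let (u₁,u₂) ∈ ℝ² satisfy λu₁ + A₁(u₁,u₂) = g₁ and λu₂ + A₂(u₁,u₂) = g₂. If (v₁,v₂) ∈ ℝ² satisfies λv₁ + A₁(v₁,v₂) ≥ g₁ and λv₂ + A₂(v₁,v₂) ≥ g₂, then u₁ ≤ v₁ and u₂ ≤ v₂. -/
open Real Filter Topology

/-- The 2×2 matrix C(α,β) from the paper. -/
noncomputable def Cmat (a b : ℝ) : Matrix (Fin 2) (Fin 2) ℝ :=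
  1 + b • !![-a, -1 + a; -1 + a, -a] + (1 - b) • !![-1 + a, -a; -a, -1 + a]

/-- The running costs L₁, L₂. -/
noncomputable def Lfun (i : Fin 2) (a b : ℝ) : ℝ :=
  if i = 0 then a * b + 2 * (1 - a) * (1 - b) else -(a * b) - 2 * (1 - a) * (1 - b)

/-- b_i(α,β,u₁,u₂) = c_{i1}(α,β)u₁ + c_{i2}(α,β)u₂ − L_i(α,β). -/
noncomputable def bfun (i : Fin 2) (a b u₁ u₂ : ℝ) : ℝ :=
  Cmat a b i 0 * u₁ + Cmat a b i 1 * u₂ - Lfun i a b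

/-- A_i(u₁,u₂) = max_{α∈𝒜} min_{β∈ℬ} b_i(α,β,u₁,u₂). -/
noncomputable def Afun (As Bs : Set ℝ) (i : Fin 2) (u₁ u₂ : ℝ) : ℝ :=
  sSup ((fun a => sInf ((fun b => bfun i a b u₁ u₂) '' Bs)) '' As)

lemma Cmat00 (a b : ℝ) : Cmat a b 0 0 = a + b - 2 * (a * b) := by
  simp [Cmat, Matrix.one_apply]; ring

lemma Cmat01 (a b : ℝ) : Cmat a b 0 1 = -(a + b - 2 * (a * b)) := by
  simp [Cmat, Matrix.one_apply]; ring

lemma Cmat10 (a b : ℝ) : Cmat a b 1 0 = -(a + b - 2 * (a * b)) := by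
  simp [Cmat, Matrix.one_apply]; ring

lemma Cmat11 (a b : ℝ) : Cmat a b 1 1 = a + b - 2 * (a * b) := by
  simp [Cmat, Matrix.one_apply]; ring

lemma bfun0 (a b u₁ u₂ : ℝ) :
    bfun 0 a b u₁ u₂ = (a + b - 2 * (a * b)) * (u₁ - u₂) - (a * b + 2 * (1 - a) * (1 - b)) := by
  simp [bfun, Cmat00, Cmat01, Lfun]; ring

lemma bfun1 (a b u₁ u₂ : ℝ) :
    bfun 1 a b u₁ u₂ = (a + b - 2 * (a * b)) * (u₂ - u₁) + (a * b + 2 * (1 - a) * (1 - b)) := by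
  simp [bfun, Cmat10, Cmat11, Lfun]; ring

lemma bfun_cont_b (i : Fin 2) (a u₁ u₂ : ℝ) :
    Continuous (fun b => bfun i a b u₁ u₂) := by
  fin_cases i
  · show Continuous fun b => bfun 0 a b u₁ u₂
    simp only [bfun0]; fun_prop
  · show Continuous fun b => bfun 1 a b u₁ u₂
    simp only [bfun1]; fun_prop

lemma bfun_cont_a (i : Fin 2) (b u₁ u₂ : ℝ) :
    Continuous (fun a => bfun i a b u₁ u₂) := by
  fin_cases i
  · show Continuous fun a => bfun 0 a b u₁ u₂
    simp only [bfun0]; fun_prop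
  · show Continuous fun a => bfun 1 a b u₁ u₂
    simp only [bfun1]; fun_prop

lemma Afun_mono (As Bs : Set ℝ) (hAne : As.Nonempty) (hAcp : IsCompact As)
    (hBne : Bs.Nonempty) (hBcp : IsCompact Bs) (i : Fin 2) (u₁ u₂ v₁ v₂ : ℝ)
    (h : ∀ a ∈ As, ∀ b ∈ Bs, bfun i a b v₁ v₂ ≤ bfun i a b u₁ u₂) :
    Afun As Bs i v₁ v₂ ≤ Afun As Bs i u₁ u₂ := by
  have hbddB : ∀ (a w₁ w₂ : ℝ), BddBelow ((fun b => bfun i a b w₁ w₂) '' Bs) := by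
    intro a w₁ w₂
    exact (hBcp.image (bfun_cont_b i a w₁ w₂)).bddBelow
  have hbddA : BddAbove ((fun a => sInf ((fun b => bfun i a b u₁ u₂) '' Bs)) '' As) := by
    obtain ⟨b₀, hb₀⟩ := hBne
    obtain ⟨M, hM⟩ := (hAcp.image (bfun_cont_a i b₀ u₁ u₂)).bddAbove
    refine ⟨M, ?_⟩
    rintro x ⟨a, ha, rfl⟩
    calc sInf ((fun b => bfun i a b u₁ u₂) '' Bs) ≤ bfun i a b₀ u₁ u₂ :=
          csInf_le (hbddB a u₁ u₂) ⟨b₀, hb₀, rfl⟩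
      _ ≤ M := hM ⟨a, ha, rfl⟩
  unfold Afun
  apply csSup_le (hAne.image _)
  rintro x ⟨a, ha, rfl⟩
  have h1 : sInf ((fun b => bfun i a b v₁ v₂) '' Bs) ≤
      sInf ((fun b => bfun i a b u₁ u₂) '' Bs) := by
    apply le_csInf (hBne.image _)
    rintro y ⟨b, hb, rfl⟩
    calc sInf ((fun b => bfun i a b v₁ v₂) '' Bs) ≤ bfun i a b v₁ v₂ :=
          csInf_le (hbddB a v₁ v₂) ⟨b, hb, rfl⟩
      _ ≤ bfun i a b u₁ u₂ := h a ha b hb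
  exact h1.trans (le_csSup hbddA ⟨a, ha, rfl⟩)

theorem comparison_super (As Bs : Fin 2 → Set ℝ)
    (hAne : ∀ i, (As i).Nonempty) (hAcp : ∀ i, IsCompact (As i))
    (hAsub : ∀ i, As i ⊆ Set.Icc (0 : ℝ) 1)
    (hBne : ∀ i, (Bs i).Nonempty) (hBcp : ∀ i, IsCompact (Bs i))
    (hBsub : ∀ i, Bs i ⊆ Set.Icc (0 : ℝ) 1)
    (lam : ℝ) (hlam : 0 < lam) (g₁ g₂ u₁ u₂ v₁ v₂ : ℝ)
    (hu₁ : lam * u₁ + Afun (As 0) (Bs 0) 0 u₁ u₂ = g₁)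
    (hu₂ : lam * u₂ + Afun (As 1) (Bs 1) 1 u₁ u₂ = g₂)
    (hv₁ : lam * v₁ + Afun (As 0) (Bs 0) 0 v₁ v₂ ≥ g₁)
    (hv₂ : lam * v₂ + Afun (As 1) (Bs 1) 1 v₁ v₂ ≥ g₂) :
    u₁ ≤ v₁ ∧ u₂ ≤ v₂ := by
  rcases le_total (u₂ - v₂) (u₁ - v₁) with hc | hc
  · have key : Afun (As 0) (Bs 0) 0 v₁ v₂ ≤ Afun (As 0) (Bs 0) 0 u₁ u₂ := by
      apply Afun_mono _ _ (hAne 0) (hAcp 0) (hBne 0) (hBcp 0)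
      intro a ha b hb
      obtain ⟨ha0, ha1⟩ := hAsub 0 ha
      obtain ⟨hb0, hb1⟩ := hBsub 0 hb
      have hcd : (0:ℝ) ≤ a + b - 2 * (a * b) := by nlinarith
      rw [bfun0, bfun0]
      nlinarith [mul_nonneg hcd (sub_nonneg.2 hc)]
    have hw1 : u₁ ≤ v₁ := by nlinarith
    exact ⟨hw1, by linarith⟩
  · have key : Afun (As 1) (Bs 1) 1 v₁ v₂ ≤ Afun (As 1) (Bs 1) 1 u₁ u₂ := by
      apply Afun_mono _ _ (hAne 1) (hAcp 1) (hBne 1) (hBcp 1)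
      intro a ha b hb
      obtain ⟨ha0, ha1⟩ := hAsub 1 ha
      obtain ⟨hb0, hb1⟩ := hBsub 1 hb
      have hcd : (0:ℝ) ≤ a + b - 2 * (a * b) := by nlinarith
      rw [bfun1, bfun1]
      nlinarith [mul_nonneg hcd (sub_nonneg.2 hc)]
    have hw2 : u₂ ≤ v₂ := by nlinarith
    exact ⟨by linarith, hw2⟩
end

section
/- B₁(1/√2, −1/√2) = 0 and B₂(1/√2, −1/√2) = 0. -/
open Real Filter Topology

/-- The set 𝒜 = {2 − √2 + 4^{−k} : k ≥ 1} ∪ {2 − √2}. -/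
noncomputable def calA : Set ℝ :=
  {x | ∃ k : ℕ, 1 ≤ k ∧ x = 2 - Real.sqrt 2 + (4 : ℝ) ^ (-(k : ℤ))} ∪ {2 - Real.sqrt 2}

/-- The set ℬ = {0, 1}. -/
def calB : Set ℝ := {0, 1}

/-- B_i(u₁,u₂) = max_{α∈𝒜} min_{β∈ℬ} b_i(α,β,u₁,u₂). -/
noncomputable def Bop (i : Fin 2) (u₁ u₂ : ℝ) : ℝ := Afun calA calB i u₁ u₂

/-!
On the antidiagonal `u₂ = -u₁` one has `b₂ = -b₁`, and at `u₁ = 1/√2` both affine functions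
`α ↦ b₁(α, 0, u)` and `α ↦ b₁(α, 1, u)` vanish at `α = 2 - √2 = min 𝒜`, the first increasing and the
second decreasing in `α`. So `α = 2 - √2` is a saddle point of the max-min with value `0`: there
`b_i` vanishes for both `β`, and for every larger `α` one choice of `β` makes `b_i ≤ 0`.
-/

theorem csSup_image_csInf_image_eq {A B : Set ℝ} {f : ℝ → ℝ → ℝ} {a₀ c : ℝ}
    (hBfin : B.Finite) (hBne : B.Nonempty) (ha₀ : a₀ ∈ A) (hsaddle : ∀ b ∈ B, f a₀ b = c)
    (hle : ∀ a ∈ A, ∃ b ∈ B, f a b ≤ c) :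
    sSup ((fun a => sInf (f a '' B)) '' A) = c := by
  refine IsGreatest.csSup_eq ⟨⟨a₀, ha₀, ?_⟩, ?_⟩
  · have hconst : f a₀ '' B = {c} := (hBne.image _).subset_singleton_iff.mp
      (Set.image_subset_iff.mpr hsaddle)
    simp only [hconst, csInf_singleton]
  · rintro _ ⟨a, ha, rfl⟩
    obtain ⟨b, hb, hfb⟩ := hle a ha
    exact (csInf_le (hBfin.image _).bddBelow (Set.mem_image_of_mem _ hb)).trans hfb

theorem isLeast_calA : IsLeast calA (2 - √2) := by
  refine ⟨Or.inr rfl, ?_⟩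
  rintro a (⟨k, -, rfl⟩ | rfl)
  · have : (0 : ℝ) < 4 ^ (-(k : ℤ)) := zpow_pos (by norm_num) _
    linarith
  · exact le_rfl

theorem bfun_one_eq_neg_bfun_zero (a b u₁ u₂ : ℝ) :
    bfun 1 a b u₁ u₂ = -bfun 0 a b (-u₂) (-u₁) := by
  simp only [bfun, Lfun, Cmat, Matrix.add_apply, Matrix.smul_apply, Matrix.one_apply, Matrix.of_apply,
    Matrix.cons_val_zero, Matrix.cons_val_one, Matrix.cons_val_fin_one, Matrix.cons_val', smul_eq_mul]
  norm_num
  ring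

theorem bfun_zero_eq (a b u₁ u₂ : ℝ) :
    bfun 0 a b u₁ u₂ = (1 - b * a + (1 - b) * (a - 1)) * u₁ + (b * (a - 1) - (1 - b) * a) * u₂
      - (a * b + 2 * (1 - a) * (1 - b)) := by
  simp only [bfun, Lfun, Cmat, Matrix.add_apply, Matrix.smul_apply, Matrix.one_apply, Matrix.of_apply,
    Matrix.cons_val_zero, Matrix.cons_val_one, Matrix.cons_val_fin_one, Matrix.cons_val', smul_eq_mul]
  norm_num
  ring

theorem bfun_zero_zero_antidiag (a u : ℝ) : bfun 0 a 0 u (-u) = 2 * a * u - 2 * (1 - a) := by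
  rw [bfun_zero_eq]
  ring

theorem bfun_zero_one_antidiag (a u : ℝ) : bfun 0 a 1 u (-u) = 2 * (1 - a) * u - a := by
  rw [bfun_zero_eq]
  ring

theorem bfun_zero_antidiag_one_div_sqrt_two_eq_zero {b : ℝ} (hb : b ∈ calB) :
    bfun 0 (2 - √2) b (1 / √2) (-(1 / √2)) = 0 := by
  have hs : √2 * √2 = 2 := mul_self_sqrt zero_le_two
  rcases hb with rfl | rfl
  · rw [bfun_zero_zero_antidiag]
    field_simp
    linarith
  · rw [bfun_zero_one_antidiag]
    field_simp
    linarith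

theorem bfun_zero_zero_antidiag_one_div_sqrt_two_nonneg {a : ℝ} (ha : 2 - √2 ≤ a) :
    0 ≤ bfun 0 a 0 (1 / √2) (-(1 / √2)) := by
  have h₀ := bfun_zero_antidiag_one_div_sqrt_two_eq_zero (Or.inl rfl)
  rw [bfun_zero_zero_antidiag] at h₀ ⊢
  have : 0 ≤ 1 / √2 := by positivity
  nlinarith

theorem bfun_zero_one_antidiag_one_div_sqrt_two_nonpos {a : ℝ} (ha : 2 - √2 ≤ a) :
    bfun 0 a 1 (1 / √2) (-(1 / √2)) ≤ 0 := by
  have h₀ := bfun_zero_antidiag_one_div_sqrt_two_eq_zero (Or.inr rfl)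
  rw [bfun_zero_one_antidiag] at h₀ ⊢
  have : 0 ≤ 1 / √2 := by positivity
  nlinarith

theorem B_at_special_point :
    Bop 0 (1 / Real.sqrt 2) (-(1 / Real.sqrt 2)) = 0 ∧
    Bop 1 (1 / Real.sqrt 2) (-(1 / Real.sqrt 2)) = 0 := by
  have hfin : calB.Finite := (Set.finite_singleton 1).insert 0
  have hne : calB.Nonempty := ⟨0, Or.inl rfl⟩
  constructor
  · refine csSup_image_csInf_image_eq hfin hne isLeast_calA.1
      (fun b hb => bfun_zero_antidiag_one_div_sqrt_two_eq_zero hb) fun a ha => ⟨1, Or.inr rfl, ?_⟩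
    exact bfun_zero_one_antidiag_one_div_sqrt_two_nonpos (isLeast_calA.2 ha)
  · refine csSup_image_csInf_image_eq hfin hne isLeast_calA.1
      (fun b hb => ?_) fun a ha => ⟨0, Or.inl rfl, ?_⟩
    · rw [bfun_one_eq_neg_bfun_zero, neg_neg, bfun_zero_antidiag_one_div_sqrt_two_eq_zero hb, neg_zero]
    · rw [bfun_one_eq_neg_bfun_zero, neg_neg, neg_nonpos]
      exact bfun_zero_zero_antidiag_one_div_sqrt_two_nonneg (isLeast_calA.2 ha)
end

section
/- The family (X_λ, Y_λ) of unique solutions of λX_λ + B₁(X_λ,Y_λ) = 0, λY_λ + B₂(X_λ,Y_λ) = 0 does not converge as λ → 0+; that is, there is no point (a,b) ∈ ℝ² such that (X_λ,Y_λ) → (a,b) as λ → 0+. -/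
open Real Filter Topology

/-!
The operators only see `w = u₁ - u₂`, through `H₀ w = sup_α min (ℓ₀ α w) (ℓ₁ α w)` and
`H₁ w = sup_α min (-ℓ₀ α w) (-ℓ₁ α w)`, where `ℓ₀, ℓ₁` (`payoff₀, payoff₁`) are `b₁` at `β = 0, 1`.
If `(X_λ, Y_λ)` converged, `w_λ = X_λ - Y_λ` would converge to a common zero of the 1-Lipschitz
functions `H₀` and `H₁`. For every `α` the two lines cross at the value `(w² - 2) / (2w + 3)`, so
that zero is `√2`, where both lines vanish at `α = 2 - √2`.

Near this point the solution is governed by the grid points `2 - √2 + 4⁻ᵏ`: if `4⁻ᵏ = ρλ` with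
`ρ ∈ [1/40, 1/30]`, the optimal `α` is exactly `2 - √2 + 4⁻ᵏ`, and the resulting linear equations
give `X_λ = (2 - √2) w_λ - ρ (w_λ + √2)`. Along `λ = 4⁻ⁿ / ρ` the values `X_λ` therefore tend to
`(2 - √2) √2 - 2√2 ρ`, which depends on `ρ`.
-/

open Set

noncomputable def payoff₀ (a w : ℝ) : ℝ := a * w + 2 * a - 2

noncomputable def payoff₁ (a w : ℝ) : ℝ := (1 - a) * w - a

lemma bfun_zero (a b u v : ℝ) :
    bfun 0 a b u v = (a + b - 2 * a * b) * (u - v) - (a * b + 2 * (1 - a) * (1 - b)) := by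
  simp only [bfun, Cmat, Lfun, Matrix.add_apply, Matrix.smul_apply, Matrix.one_apply,
    Matrix.of_apply, Matrix.cons_val', Matrix.cons_val_zero, Matrix.cons_val_one,
    Matrix.cons_val_fin_one, smul_eq_mul, zero_ne_one, if_true, if_false]
  ring

lemma bfun_one (a b u v : ℝ) : bfun 1 a b u v = -bfun 0 a b u v := by
  simp only [bfun, Cmat, Lfun, Matrix.add_apply, Matrix.smul_apply, Matrix.one_apply,
    Matrix.of_apply, Matrix.cons_val', Matrix.cons_val_zero, Matrix.cons_val_one,
    Matrix.cons_val_fin_one, smul_eq_mul, zero_ne_one, one_ne_zero, if_true, if_false]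
  ring

lemma bfun_zero_zero (a u v : ℝ) : bfun 0 a 0 u v = payoff₀ a (u - v) := by
  rw [bfun_zero, payoff₀]; ring

lemma bfun_zero_one (a u v : ℝ) : bfun 0 a 1 u v = payoff₁ a (u - v) := by
  rw [bfun_zero, payoff₁]; ring

noncomputable def H₀ (A : Set ℝ) (w : ℝ) : ℝ :=
  sSup ((fun a => min (payoff₀ a w) (payoff₁ a w)) '' A)

noncomputable def H₁ (A : Set ℝ) (w : ℝ) : ℝ :=
  sSup ((fun a => min (-payoff₀ a w) (-payoff₁ a w)) '' A)

lemma Bop_zero_eq (u v : ℝ) : Bop 0 u v = H₀ calA (u - v) := by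
  simp only [Bop, Afun, H₀, calB, image_pair, csInf_pair, bfun_zero_zero, bfun_zero_one]

lemma Bop_one_eq (u v : ℝ) : Bop 1 u v = H₁ calA (u - v) := by
  simp only [Bop, Afun, H₁, calB, image_pair, csInf_pair, bfun_one, bfun_zero_zero, bfun_zero_one]

lemma payoff_crossing (a w : ℝ) : (w + 1) * payoff₀ a w + (w + 2) * payoff₁ a w = w ^ 2 - 2 := by
  unfold payoff₀ payoff₁; ring

lemma payoff₀_le_of_le {a a' w : ℝ} (hw : -2 ≤ w) (h : a ≤ a') : payoff₀ a w ≤ payoff₀ a' w := by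
  unfold payoff₀; nlinarith

lemma payoff₁_le_of_le {a a' w : ℝ} (hw : -1 ≤ w) (h : a ≤ a') : payoff₁ a' w ≤ payoff₁ a w := by
  unfold payoff₁; nlinarith

lemma payoff₀_sqrt_two_add (e w : ℝ) :
    payoff₀ (2 - √2 + e) w = -(2 - √2) * (√2 - w) + e * (w + 2) := by
  unfold payoff₀; linear_combination (-1 : ℝ) * sq_sqrt (zero_le_two : (0 : ℝ) ≤ 2)

lemma payoff₁_sqrt_two_add (e w : ℝ) :
    payoff₁ (2 - √2 + e) w = -(√2 - 1) * (√2 - w) - e * (w + 1) := by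
  unfold payoff₁; linear_combination sq_sqrt (zero_le_two : (0 : ℝ) ≤ 2)

lemma lipschitzWith_one_of_sub_eq {f : ℝ → ℝ} {c : ℝ} (hc : |c| ≤ 1)
    (hf : ∀ x y, f x - f y = c * (x - y)) : LipschitzWith 1 f :=
  LipschitzWith.of_dist_le_mul fun x y => by
    rw [Real.dist_eq, Real.dist_eq, hf, abs_mul, NNReal.coe_one, one_mul]
    exact mul_le_of_le_one_left (abs_nonneg _) hc

lemma lipschitzWith_one_sSup_image {ι : Type*} {A : Set ι} {f : ι → ℝ → ℝ} (hne : A.Nonempty)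
    (hbdd : ∀ w, BddAbove ((f · w) '' A)) (hf : ∀ a ∈ A, LipschitzWith 1 (f a)) :
    LipschitzWith 1 fun w => sSup ((f · w) '' A) :=
  LipschitzWith.of_le_add fun x y => csSup_le (hne.image _) <| forall_mem_image.2 fun a ha => by
    have hxy := (hf a ha).le_add_mul x y
    have hy := le_csSup (hbdd y) (mem_image_of_mem (f · y) ha)
    simp only [NNReal.coe_one, one_mul] at hxy
    linarith

section General

variable {A : Set ℝ} {a w : ℝ}

lemma bddAbove_H₀_image (hA : A ⊆ Icc 0 1) (w : ℝ) :
    BddAbove ((fun a => min (payoff₀ a w) (payoff₁ a w)) '' A) := by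
  refine ⟨|w|, forall_mem_image.2 fun a ha => (min_le_right _ _).trans ?_⟩
  obtain ⟨h0, h1⟩ := hA ha
  unfold payoff₁
  nlinarith [abs_nonneg w, le_abs_self w]

lemma bddAbove_H₁_image (hA : A ⊆ Icc 0 1) (w : ℝ) :
    BddAbove ((fun a => min (-payoff₀ a w) (-payoff₁ a w)) '' A) := by
  refine ⟨2 + |w|, forall_mem_image.2 fun a ha => (min_le_left _ _).trans ?_⟩
  obtain ⟨h0, h1⟩ := hA ha
  unfold payoff₀
  nlinarith [abs_nonneg w, neg_abs_le w]

lemma le_H₀ (hA : A ⊆ Icc 0 1) (ha : a ∈ A) (w : ℝ) :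
    min (payoff₀ a w) (payoff₁ a w) ≤ H₀ A w :=
  le_csSup (bddAbove_H₀_image hA w) (mem_image_of_mem _ ha)

lemma le_H₁ (hA : A ⊆ Icc 0 1) (ha : a ∈ A) (w : ℝ) :
    min (-payoff₀ a w) (-payoff₁ a w) ≤ H₁ A w :=
  le_csSup (bddAbove_H₁_image hA w) (mem_image_of_mem _ ha)

lemma H₀_le {M : ℝ} (hne : A.Nonempty) (h : ∀ a ∈ A, min (payoff₀ a w) (payoff₁ a w) ≤ M) :
    H₀ A w ≤ M :=
  csSup_le (hne.image _) (forall_mem_image.2 h)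

lemma H₁_le {M : ℝ} (hne : A.Nonempty) (h : ∀ a ∈ A, min (-payoff₀ a w) (-payoff₁ a w) ≤ M) :
    H₁ A w ≤ M :=
  csSup_le (hne.image _) (forall_mem_image.2 h)

lemma mul_H₀_le (hne : A.Nonempty) (hw : -1 ≤ w) : (2 * w + 3) * H₀ A w ≤ w ^ 2 - 2 := by
  rw [mul_comm, ← le_div_iff₀ (by linarith)]
  refine H₀_le hne fun a _ => ?_
  rw [le_div_iff₀ (by linarith), ← payoff_crossing a w]
  nlinarith [min_le_left (payoff₀ a w) (payoff₁ a w), min_le_right (payoff₀ a w) (payoff₁ a w)]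

lemma mul_H₁_le (hne : A.Nonempty) (hw : -1 ≤ w) : (2 * w + 3) * H₁ A w ≤ 2 - w ^ 2 := by
  rw [mul_comm, ← le_div_iff₀ (by linarith)]
  refine H₁_le hne fun a _ => ?_
  rw [le_div_iff₀ (by linarith), ← neg_sub, ← payoff_crossing a w]
  nlinarith [min_le_left (-payoff₀ a w) (-payoff₁ a w), min_le_right (-payoff₀ a w) (-payoff₁ a w)]

lemma lipschitzWith_H₀ (hA : A ⊆ Icc 0 1) (hne : A.Nonempty) : LipschitzWith 1 (H₀ A) := by
  refine lipschitzWith_one_sSup_image hne (bddAbove_H₀_image hA) fun a ha => ?_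
  obtain ⟨h0, h1⟩ := hA ha
  simpa only [max_self] using
    (lipschitzWith_one_of_sub_eq (c := a) (abs_le.2 ⟨by linarith, h1⟩)
      fun x y => by unfold payoff₀; ring).min
    (lipschitzWith_one_of_sub_eq (c := 1 - a) (abs_le.2 ⟨by linarith, by linarith⟩)
      fun x y => by unfold payoff₁; ring)

lemma lipschitzWith_H₁ (hA : A ⊆ Icc 0 1) (hne : A.Nonempty) : LipschitzWith 1 (H₁ A) := by
  refine lipschitzWith_one_sSup_image hne (bddAbove_H₁_image hA) fun a ha => ?_
  obtain ⟨h0, h1⟩ := hA ha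
  simpa only [max_self] using
    (lipschitzWith_one_of_sub_eq (c := -a) (abs_le.2 ⟨by linarith, by linarith⟩)
      fun x y => by unfold payoff₀; ring).min
    (lipschitzWith_one_of_sub_eq (c := a - 1) (abs_le.2 ⟨by linarith, by linarith⟩)
      fun x y => by unfold payoff₁; ring)

lemma eq_sqrt_two_of_H_eq_zero (hA : A ⊆ Icc 0 1) (hne : A.Nonempty) {c : ℝ}
    (h₀ : H₀ A c = 0) (h₁ : H₁ A c = 0) : c = √2 := by
  have hc : -1 ≤ c := by
    by_contra! hc
    have : H₀ A c ≤ -1 := H₀_le hne fun a ha => by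
      obtain ⟨h0, h1⟩ := hA ha
      refine (min_le_right _ _).trans ?_
      unfold payoff₁
      nlinarith
    linarith
  have hsq : c ^ 2 = 2 := by
    have h₀' := mul_H₀_le hne hc (A := A)
    have h₁' := mul_H₁_le hne hc (A := A)
    rw [h₀, mul_zero] at h₀'
    rw [h₁, mul_zero] at h₁'
    linarith
  have hc0 : 0 ≤ c := by nlinarith
  rw [← hsq, sqrt_sq hc0]

lemma H₀_le_of_gap (hne : A.Nonempty) (hw : -1 ≤ w) {a₁ a₂ : ℝ}
    (hgap : ∀ a ∈ A, a ≤ a₁ ∨ a₂ ≤ a) : H₀ A w ≤ max (payoff₀ a₁ w) (payoff₁ a₂ w) :=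
  H₀_le hne fun a ha => (hgap a ha).elim
    (fun h => (min_le_left _ _).trans <| (payoff₀_le_of_le (by linarith) h).trans (le_max_left _ _))
    (fun h => (min_le_right _ _).trans <| (payoff₁_le_of_le hw h).trans (le_max_right _ _))

lemma H₁_le_of_gap (hne : A.Nonempty) (hw : -1 ≤ w) {a₁ a₂ : ℝ}
    (hgap : ∀ a ∈ A, a ≤ a₁ ∨ a₂ ≤ a) : H₁ A w ≤ max (-payoff₁ a₁ w) (-payoff₀ a₂ w) :=
  H₁_le hne fun a ha => (hgap a ha).elim
    (fun h => (min_le_right _ _).trans <| (neg_le_neg (payoff₁_le_of_le hw h)).trans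
      (le_max_left _ _))
    (fun h => (min_le_left _ _).trans <| (neg_le_neg (payoff₀_le_of_le (by linarith) h)).trans
      (le_max_right _ _))

end General

lemma sqrt_two_mem_Ioo : √2 ∈ Ioo (1.4142 : ℝ) 1.4143 :=
  ⟨(lt_sqrt (by norm_num)).2 (by norm_num), (sqrt_lt' (by norm_num)).2 (by norm_num)⟩

section Solution

variable {A : Set ℝ} {lam w : ℝ}

lemma min_le_H₀_sqrt_two_sub (hA : A ⊆ Icc 0 1) (ha₀ : 2 - √2 ∈ A) (w : ℝ) :
    min (-(2 - √2) * (√2 - w)) (-(√2 - 1) * (√2 - w)) ≤ H₀ A w := by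
  have h := le_H₀ hA ha₀ w
  rw [← add_zero (2 - √2), payoff₀_sqrt_two_add, payoff₁_sqrt_two_add] at h
  simpa only [zero_mul, add_zero, sub_zero] using h

lemma min_le_H₁_sqrt_two_sub (hA : A ⊆ Icc 0 1) (ha₀ : 2 - √2 ∈ A) (w : ℝ) :
    min ((2 - √2) * (√2 - w)) ((√2 - 1) * (√2 - w)) ≤ H₁ A w := by
  have h := le_H₁ hA ha₀ w
  rw [← add_zero (2 - √2), payoff₀_sqrt_two_add, payoff₁_sqrt_two_add] at h
  simpa only [zero_mul, add_zero, sub_zero, neg_mul, neg_neg] using h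

lemma lt_sqrt_two_of_eq (hA : A ⊆ Icc 0 1) (ha₀ : 2 - √2 ∈ A) (hlam : 0 < lam)
    (h : lam * w = H₁ A w - H₀ A w) : w < √2 := by
  by_contra! hw
  obtain ⟨hs₁, hs₂⟩ := sqrt_two_mem_Ioo
  have h₀ : 0 ≤ H₀ A w :=
    (le_min (by nlinarith) (by nlinarith)).trans (min_le_H₀_sqrt_two_sub hA ha₀ w)
  have h₁ : H₁ A w ≤ 0 := by
    have := mul_H₁_le ⟨_, ha₀⟩ (show -1 ≤ w by linarith) (A := A)
    nlinarith [sq_sqrt (zero_le_two : (0 : ℝ) ≤ 2)]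
  nlinarith

lemma sqrt_two_sub_mem_Icc (hA : A ⊆ Icc 0 1) (ha₀ : 2 - √2 ∈ A) (hlam : 0 < lam)
    (h : lam * w = H₁ A w - H₀ A w) (hw : √2 - 1 / 1000 ≤ w) :
    √2 - w ∈ Icc (13 / 10 * lam) (8 / 5 * lam) := by
  obtain ⟨hs₁, hs₂⟩ := sqrt_two_mem_Ioo
  have hδ : 0 < √2 - w := sub_pos.2 (lt_sqrt_two_of_eq hA ha₀ hlam h)
  have hne : A.Nonempty := ⟨_, ha₀⟩
  have hf₀ := mul_H₀_le hne (show -1 ≤ w by linarith) (A := A)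
  have hf₁ := mul_H₁_le hne (show -1 ≤ w by linarith) (A := A)
  have hg₀ : -(2 - √2) * (√2 - w) ≤ H₀ A w :=
    (le_min le_rfl (by nlinarith)).trans (min_le_H₀_sqrt_two_sub hA ha₀ w)
  have hg₁ : (√2 - 1) * (√2 - w) ≤ H₁ A w :=
    (le_min (by nlinarith) le_rfl).trans (min_le_H₁_sqrt_two_sub hA ha₀ w)
  have h23 : 0 < 2 * w + 3 := by linarith
  have hlw := congrArg ((2 * w + 3) * ·) h
  have hcross : 2 - w ^ 2 = (√2 - w) * (√2 + w) := by
    linear_combination -sq_sqrt (zero_le_two : (0 : ℝ) ≤ 2)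
  have hupper : (2 * w + 3) * w * lam ≤ (√2 - w) * (√2 + w + (2 * w + 3) * (2 - √2)) := by
    nlinarith [mul_le_mul_of_nonneg_left hg₀ h23.le]
  have hlower : (√2 - w) * ((2 * w + 3) * (√2 - 1) + √2 + w) ≤ (2 * w + 3) * w * lam := by
    nlinarith [mul_le_mul_of_nonneg_left hg₁ h23.le]
  constructor
  · nlinarith [mul_le_mul_of_nonneg_right (show 8.2 ≤ (2 * w + 3) * w by nlinarith) hlam.le,
      mul_le_mul_of_nonneg_left (show √2 + w + (2 * w + 3) * (2 - √2) ≤ 6.25 by nlinarith) hδ.le]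
  · nlinarith [mul_le_mul_of_nonneg_right (show (2 * w + 3) * w ≤ 8.25 by nlinarith) hlam.le,
      mul_le_mul_of_nonneg_left (show 5.2 ≤ (2 * w + 3) * (√2 - 1) + √2 + w by nlinarith) hδ.le]

end Solution

lemma sqrt_two_sub_mem_calA : 2 - √2 ∈ calA := Or.inr rfl

lemma sqrt_two_sub_add_mem_calA {k : ℕ} (hk : 1 ≤ k) : 2 - √2 + (4 : ℝ) ^ (-(k : ℤ)) ∈ calA :=
  Or.inl ⟨k, hk, rfl⟩

lemma calA_subset_Icc : calA ⊆ Icc 0 1 := by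
  obtain ⟨hs₁, hs₂⟩ := sqrt_two_mem_Ioo
  rintro a (⟨k, hk, rfl⟩ | rfl)
  · have h₀ : (0 : ℝ) < 4 ^ (-(k : ℤ)) := by positivity
    have h₁ : (4 : ℝ) ^ (-(k : ℤ)) ≤ 4 ^ (-1 : ℤ) := zpow_le_zpow_right₀ (by norm_num) (by omega)
    rw [show (4 : ℝ) ^ (-1 : ℤ) = 1 / 4 by norm_num] at h₁
    constructor <;> linarith
  · constructor <;> linarith

lemma calA_gap (k : ℕ) {a : ℝ} (ha : a ∈ calA) :
    a ≤ 2 - √2 + (4 : ℝ) ^ (-(k : ℤ)) ∨ 2 - √2 + 4 * (4 : ℝ) ^ (-(k : ℤ)) ≤ a := by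
  rcases ha with ⟨j, -, rfl⟩ | rfl
  · rcases le_or_gt k j with hkj | hjk
    · have : (4 : ℝ) ^ (-(j : ℤ)) ≤ 4 ^ (-(k : ℤ)) := zpow_le_zpow_right₀ (by norm_num) (by omega)
      exact Or.inl (by linarith)
    · have : (4 : ℝ) ^ (1 + -(k : ℤ)) ≤ 4 ^ (-(j : ℤ)) :=
        zpow_le_zpow_right₀ (by norm_num) (by omega)
      rw [zpow_one_add₀ (by norm_num)] at this
      exact Or.inr (by linarith)
  · exact Or.inl (le_add_of_nonneg_right (by positivity))

lemma H₀_calA_eq {lam ρ w : ℝ} (hlam : 0 < lam) (hρ : ρ ∈ Icc (1 / 40 : ℝ) (1 / 30)) {k : ℕ}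
    (hk : 1 ≤ k) (he : ρ * lam = 4 ^ (-(k : ℤ))) (h : lam * w = H₁ calA w - H₀ calA w)
    (hw : √2 - 1 / 1000 ≤ w) : H₀ calA w = lam * (ρ * (w + √2) - (2 - √2) * w) := by
  obtain ⟨hs₁, hs₂⟩ := sqrt_two_mem_Ioo
  obtain ⟨hδ₁, hδ₂⟩ := sqrt_two_sub_mem_Icc calA_subset_Icc sqrt_two_sub_mem_calA hlam h hw
  obtain ⟨hρ₁, hρ₂⟩ := hρ
  have hne : calA.Nonempty := ⟨_, sqrt_two_sub_mem_calA⟩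
  have hmem := sqrt_two_sub_add_mem_calA hk
  set e : ℝ := 4 ^ (-(k : ℤ))
  have he₁ : lam / 40 ≤ e := by nlinarith
  have he₂ : e ≤ lam / 30 := by nlinarith
  have hB₁ : payoff₀ (2 - √2 + e) w ≤ payoff₁ (2 - √2 + e) w := by
    rw [payoff₀_sqrt_two_add, payoff₁_sqrt_two_add]; nlinarith
  have hB₂ : payoff₁ (2 - √2 + 4 * e) w ≤ payoff₀ (2 - √2 + e) w := by
    rw [payoff₀_sqrt_two_add, payoff₁_sqrt_two_add]; nlinarith
  have hB₃ : payoff₁ (2 - √2 + e) w ≤ payoff₀ (2 - √2 + 4 * e) w := by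
    rw [payoff₀_sqrt_two_add, payoff₁_sqrt_two_add]; nlinarith
  have hH₀ : H₀ calA w = payoff₀ (2 - √2 + e) w := le_antisymm
    ((H₀_le_of_gap hne (by linarith) fun a => calA_gap k).trans_eq (max_eq_left hB₂))
    ((min_eq_left hB₁).symm.trans_le (le_H₀ calA_subset_Icc hmem w))
  have hH₁ : H₁ calA w = -payoff₁ (2 - √2 + e) w := le_antisymm
    ((H₁_le_of_gap hne (by linarith) fun a => calA_gap k).trans_eq
      (max_eq_left (neg_le_neg hB₃)))
    ((min_eq_right (neg_le_neg hB₁)).symm.trans_le (le_H₁ calA_subset_Icc hmem w))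
  rw [hH₀, hH₁, payoff₀_sqrt_two_add, payoff₁_sqrt_two_add] at h
  rw [hH₀, payoff₀_sqrt_two_add]
  linear_combination (2 - √2) * h - (w + √2) * he

lemma tendsto_zpow_div_nhdsGT {ρ : ℝ} (hρ : 0 < ρ) :
    Tendsto (fun n : ℕ => (4 : ℝ) ^ (-((n + 1 : ℕ) : ℤ)) / ρ) atTop (𝓝[>] 0) := by
  refine tendsto_nhdsWithin_iff.2
    ⟨?_, Eventually.of_forall fun n => by simp only [mem_Ioi]; positivity⟩
  have h4 (n : ℕ) : (4 : ℝ) ^ (-((n + 1 : ℕ) : ℤ)) = 4⁻¹ ^ (n + 1) := by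
    rw [zpow_neg, zpow_natCast, inv_pow]
  simp only [h4]
  simpa using ((tendsto_pow_atTop_nhds_zero_of_lt_one (r := (4 : ℝ)⁻¹) (by norm_num)
    (by norm_num)).comp (tendsto_add_atTop_nat 1)).div_const ρ

lemma apply_eq_zero_of_tendsto {F : ℝ → ℝ} (hF : Continuous F) {w Z : ℝ → ℝ} {c z : ℝ}
    (hw : Tendsto w (𝓝[>] 0) (𝓝 c)) (hZ : Tendsto Z (𝓝[>] 0) (𝓝 z))
    (h : ∀ lam, 0 < lam → lam * Z lam + F (w lam) = 0) : F c = 0 := by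
  have hlam : Tendsto (fun lam : ℝ => lam) (𝓝[>] 0) (𝓝 0) := nhdsWithin_le_nhds
  have hlim := (hlam.mul hZ).neg
  rw [zero_mul, neg_zero] at hlim
  refine tendsto_nhds_unique ((hF.tendsto c).comp hw) (hlim.congr' ?_)
  filter_upwards [self_mem_nhdsWithin] with lam hlam
  rw [Function.comp_apply]
  linarith [h lam hlam]

section Convergence

variable {X Y : ℝ → ℝ} {p : ℝ × ℝ}

lemma tendsto_sub_nhds_sqrt_two {A : Set ℝ} (hA : A ⊆ Icc 0 1) (hne : A.Nonempty)
    (hsol : ∀ lam : ℝ, 0 < lam →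
      lam * X lam + H₀ A (X lam - Y lam) = 0 ∧ lam * Y lam + H₁ A (X lam - Y lam) = 0)
    (hp : Tendsto (fun lam => (X lam, Y lam)) (𝓝[>] 0) (𝓝 p)) :
    Tendsto (fun lam => X lam - Y lam) (𝓝[>] 0) (𝓝 √2) := by
  have hX : Tendsto X (𝓝[>] 0) (𝓝 p.1) := (continuous_fst.tendsto p).comp hp
  have hY : Tendsto Y (𝓝[>] 0) (𝓝 p.2) := (continuous_snd.tendsto p).comp hp
  have h₀ := apply_eq_zero_of_tendsto (lipschitzWith_H₀ hA hne).continuous (hX.sub hY) hX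
    fun lam hlam => (hsol lam hlam).1
  have h₁ := apply_eq_zero_of_tendsto (lipschitzWith_H₁ hA hne).continuous (hX.sub hY) hY
    fun lam hlam => (hsol lam hlam).2
  rw [← eq_sqrt_two_of_H_eq_zero hA hne h₀ h₁]
  exact hX.sub hY

lemma fst_eq_of_tendsto
    (hsol : ∀ lam : ℝ, 0 < lam →
      lam * X lam + H₀ calA (X lam - Y lam) = 0 ∧ lam * Y lam + H₁ calA (X lam - Y lam) = 0)
    (hp : Tendsto (fun lam => (X lam, Y lam)) (𝓝[>] 0) (𝓝 p))
    {ρ : ℝ} (hρ : ρ ∈ Icc (1 / 40 : ℝ) (1 / 30)) :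
    p.1 = (2 - √2) * √2 - ρ * (√2 + √2) := by
  have hρ₀ : 0 < ρ := by linarith [hρ.1]
  have hlam := tendsto_zpow_div_nhdsGT hρ₀
  have hw :=
    (tendsto_sub_nhds_sqrt_two calA_subset_Icc ⟨_, sqrt_two_sub_mem_calA⟩ hsol hp).comp hlam
  have hX := ((continuous_fst.tendsto p).comp hp).comp hlam
  refine tendsto_nhds_unique hX
    (Tendsto.congr' ?_ ((hw.const_mul _).sub ((hw.add_const _).const_mul _)))
  filter_upwards [hw.eventually (eventually_ge_nhds (show √2 - 1 / 1000 < √2 by norm_num))]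
    with n hn
  simp only [Function.comp_apply] at hn ⊢
  set lam := (4 : ℝ) ^ (-((n + 1 : ℕ) : ℤ)) / ρ
  have hpos : 0 < lam := by positivity
  obtain ⟨hx, hy⟩ := hsol lam hpos
  have h := H₀_calA_eq hpos hρ (Nat.le_add_left 1 n) (mul_div_cancel₀ _ hρ₀.ne')
    (by rw [mul_sub]; linarith) hn
  exact mul_left_cancel₀ hpos.ne' (by linear_combination h - hx)

end Convergence

theorem no_convergence (X Y : ℝ → ℝ)
    (hsol : ∀ lam : ℝ, 0 < lam →
      lam * X lam + Bop 0 (X lam) (Y lam) = 0 ∧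
      lam * Y lam + Bop 1 (X lam) (Y lam) = 0) :
    ¬ ∃ p : ℝ × ℝ,
      Filter.Tendsto (fun lam => (X lam, Y lam)) (𝓝[>] (0 : ℝ)) (𝓝 p) := by
  rintro ⟨p, hp⟩
  simp only [Bop_zero_eq, Bop_one_eq] at hsol
  have h₁ := fst_eq_of_tendsto hsol hp (ρ := 1 / 40) ⟨le_rfl, by norm_num⟩
  have h₂ := fst_eq_of_tendsto hsol hp (ρ := 1 / 30) ⟨by norm_num, le_rfl⟩
  linarith [sqrt_two_mem_Ioo.1]
end
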